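/- arXiv:0904.1407 — 3 statements merged into one kernel-verified Lean document; each statement's English description precedes it below -/
import Mathlib

section
/- Let X be a nonnegatively curved Alexandrov space and suppose that for some point p the metric spheres satisfy diam(S_R(p))/R → 0 as R → ∞. Then for any two rays r_1, r_2 emanating from a common point, d(r_1(t), r_2(t))/t → 0 as t → ∞. -/
open Real Filter Metric

/-- Nonnegative curvature in the Alexandrov (comparison) sense, via the midpoint
concavity inequality for distance functions. -/
def NonnegCurvature (X : Type*) [MetricSpace X] : Prop :=
  ∀ x y z m : X, dist y m = dist y z / 2 → dist z m = dist y z / 2 →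
    (dist x y ^ 2 + dist x z ^ 2) / 2 - dist y z ^ 2 / 4 ≤ dist x m ^ 2

/-- A ray: a unit-speed curve `[0, ∞) → X` which is globally minimizing. -/
def IsRay {X : Type*} [MetricSpace X] (r : ℝ → X) : Prop :=
  ∀ s t : ℝ, 0 ≤ s → 0 ≤ t → dist (r s) (r t) = |s - t|

/-- In a nonnegatively curved Alexandrov space, if for some point `p` the metric spheres
satisfy `diam S_R(p) / R → 0` as `R → ∞`, then any two rays `r₁, r₂` emanating from a common
point satisfy `dist (r₁ t) (r₂ t) / t → 0` as `t → ∞`. -/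
theorem rays_sublinear_of_sphere_diam_sublinear {X : Type*} [MetricSpace X]
    (hcurv : NonnegCurvature X) (p : X)
    (hdiam : Tendsto (fun R : ℝ => diam (sphere p R) / R) atTop (nhds 0))
    (r₁ r₂ : ℝ → X) (h₁ : IsRay r₁) (h₂ : IsRay r₂) (h0 : r₁ 0 = r₂ 0) :
    Tendsto (fun t : ℝ => dist (r₁ t) (r₂ t) / t) atTop (nhds 0) := by
  set d := dist p (r₁ 0) with hd
  have hd0 : 0 ≤ d := dist_nonneg
  have hq : dist p (r₂ 0) = d := by rw [hd, h0]
  set R : ℝ → ℝ := fun t => dist p (r₁ t) with hRdef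
  have hray1 : ∀ t : ℝ, 0 ≤ t → dist (r₁ 0) (r₁ t) = t := by
    intro t ht
    rw [h₁ 0 t le_rfl ht, zero_sub, abs_neg, abs_of_nonneg ht]
  have hRlb : ∀ t : ℝ, 0 ≤ t → t - d ≤ R t := by
    intro t ht
    have h1 := dist_triangle (r₁ 0) p (r₁ t)
    rw [hray1 t ht, dist_comm (r₁ 0) p, ← hd] at h1
    simpa [hRdef] using by linarith
  have hRub : ∀ t : ℝ, 0 ≤ t → R t ≤ t + d := by
    intro t ht
    have h1 := dist_triangle p (r₁ 0) (r₁ t)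
    rw [hray1 t ht, ← hd] at h1
    simpa [hRdef] using by linarith
  -- Key estimate: for large t, dist (r₁ t) (r₂ t) ≤ diam (sphere p (R t)) + 2*d
  have key : ∀ t : ℝ, 2 * d + 1 ≤ t →
      dist (r₁ t) (r₂ t) ≤ diam (sphere p (R t)) + 2 * d := by
    intro t ht
    have ht0 : (0 : ℝ) ≤ t := by linarith
    have hRl := hRlb t ht0
    have hRu := hRub t ht0
    have hRt1 : (1 : ℝ) ≤ R t := by linarith
    have hb : (0 : ℝ) ≤ R t + d := by linarith
    -- find s with dist p (r₂ s) = R t via IVT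
    have hlip : LipschitzOnWith 1 r₂ (Set.Icc 0 (R t + d)) := by
      intro x hx y hy
      rw [edist_dist, edist_dist, h₂ x y hx.1 hy.1, ENNReal.coe_one, one_mul, Real.dist_eq]
    have hcont : ContinuousOn (fun s => dist p (r₂ s)) (Set.Icc 0 (R t + d)) :=
      (continuous_const.dist continuous_id).comp_continuousOn hlip.continuousOn
    have hray2 : ∀ u : ℝ, 0 ≤ u → dist (r₂ 0) (r₂ u) = u := by
      intro u hu
      rw [h₂ 0 u le_rfl hu, zero_sub, abs_neg, abs_of_nonneg hu]
    have hmem : R t ∈ Set.Icc (dist p (r₂ 0)) (dist p (r₂ (R t + d))) := by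
      constructor
      · rw [hq]; linarith
      · have h2b := hray2 (R t + d) hb
        have htr := dist_triangle (r₂ 0) p (r₂ (R t + d))
        rw [h2b, dist_comm (r₂ 0) p, hq] at htr
        linarith
    obtain ⟨s, hs_mem, hfs⟩ := intermediate_value_Icc hb hcont hmem
    have hs0 : 0 ≤ s := hs_mem.1
    have hfs' : dist p (r₂ s) = R t := hfs
    have hss : dist (r₂ 0) (r₂ s) = s := hray2 s hs0
    -- |s - R t| ≤ d
    have h3 : s ≤ R t + d := by
      have htr := dist_triangle (r₂ 0) p (r₂ s)
      rw [hss, dist_comm (r₂ 0) p, hq, hfs'] at htr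
      linarith
    have h4 : R t ≤ s + d := by
      have htr := dist_triangle p (r₂ 0) (r₂ s)
      rw [hss, hq, hfs'] at htr
      linarith
    -- dist (r₂ s) (r₂ t) ≤ 2*d
    have h5 : dist (r₂ s) (r₂ t) ≤ 2 * d := by
      rw [h₂ s t hs0 ht0, abs_le]
      constructor <;> linarith
    -- both points on the sphere of radius R t
    have hm1 : r₁ t ∈ sphere p (R t) := by
      simp [mem_sphere, dist_comm, hRdef]
    have hm2 : r₂ s ∈ sphere p (R t) := by
      simp [mem_sphere, dist_comm (r₂ s) p, hfs']
    have h6 : dist (r₁ t) (r₂ s) ≤ diam (sphere p (R t)) :=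
      dist_le_diam_of_mem isBounded_sphere hm1 hm2
    calc dist (r₁ t) (r₂ t) ≤ dist (r₁ t) (r₂ s) + dist (r₂ s) (r₂ t) := dist_triangle _ _ _
      _ ≤ diam (sphere p (R t)) + 2 * d := by linarith
  -- Limit part
  have hRtop : Tendsto R atTop atTop := by
    refine tendsto_atTop_mono' atTop ?_ ((tendsto_atTop_add_const_right atTop (-d) tendsto_id).congr
      (fun t => (sub_eq_add_neg t d).symm))
    filter_upwards [eventually_ge_atTop (0 : ℝ)] with t ht using hRlb t ht
  have h1 : Tendsto (fun t => diam (sphere p (R t)) / R t) atTop (nhds 0) :=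
    hdiam.comp hRtop
  -- R t / t → 1
  have hRdiv : Tendsto (fun t => R t / t) atTop (nhds 1) := by
    have hz : Tendsto (fun t : ℝ => R t / t - 1) atTop (nhds 0) := by
      apply squeeze_zero_norm' (a := fun t : ℝ => d / t)
      · filter_upwards [eventually_ge_atTop (1 : ℝ)] with t ht
        have ht0 : (0 : ℝ) < t := by linarith
        have ht0' : (0 : ℝ) ≤ t := le_of_lt ht0
        have : R t / t - 1 = (R t - t) / t := by field_simp
        rw [this, Real.norm_eq_abs, abs_div, abs_of_pos ht0]
        have habs : |R t - t| ≤ d := by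
          rw [abs_le]
          exact ⟨by linarith [hRlb t ht0'], by linarith [hRub t ht0']⟩
        gcongr
      · exact Tendsto.div_atTop tendsto_const_nhds tendsto_id
    have := hz.add (tendsto_const_nhds (x := (1:ℝ)))
    simpa using this
  have hprod : Tendsto (fun t => diam (sphere p (R t)) / R t * (R t / t)) atTop (nhds 0) := by
    have := h1.mul hRdiv
    simpa using this
  have hlim2 : Tendsto (fun t => diam (sphere p (R t)) / t) atTop (nhds 0) := by
    apply hprod.congr'
    filter_upwards [eventually_ge_atTop (2 * d + 1)] with t ht
    have ht0 : (0 : ℝ) ≤ t := by linarith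
    have hRpos : (0:ℝ) < R t := by have := hRlb t ht0; linarith
    have hRne : R t ≠ 0 := hRpos.ne'
    field_simp
  have h2d : Tendsto (fun t : ℝ => 2 * d / t) atTop (nhds 0) :=
    Tendsto.div_atTop tendsto_const_nhds tendsto_id
  have hsum : Tendsto (fun t => diam (sphere p (R t)) / t + 2 * d / t) atTop (nhds 0) := by
    have := hlim2.add h2d
    simpa using this
  apply tendsto_of_tendsto_of_tendsto_of_le_of_le' (g := fun _ => (0:ℝ))
    (h := fun t => diam (sphere p (R t)) / t + 2 * d / t) tendsto_const_nhds hsum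
  · filter_upwards [eventually_ge_atTop (1 : ℝ)] with t ht
    have : (0:ℝ) < t := by linarith
    positivity
  · filter_upwards [eventually_ge_atTop (2 * d + 1)] with t ht
    have ht0 : (0 : ℝ) < t := by linarith
    have := key t ht
    rw [← add_div]
    gcongr
end

section
/- Let X be a nonnegatively curved Alexandrov space with one-point Tits boundary (equivalently diam(S_R)/R → 0). Fix p ∈ X. Then for every ε > 0 there exists D such that for all q with d(p,q) ≥ D, for every ray r starting at q and every minimizing segment σ from q to p, the angle at q between σ and r is at least π - ε. -/
open Real Filter Metric

/-- A ray emanating from `q`. -/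
def IsRayFrom {X : Type*} [MetricSpace X] (r : ℝ → X) (q : X) : Prop :=
  r 0 = q ∧ ∀ s t : ℝ, 0 ≤ s → 0 ≤ t → dist (r s) (r t) = |s - t|

/-- A minimizing segment from `q` to `p`, parametrized by arclength on `[0, dist q p]`. -/
def IsSegmentFromTo {X : Type*} [MetricSpace X] (σ : ℝ → X) (q p : X) : Prop :=
  σ 0 = q ∧ σ (dist q p) = p ∧
    ∀ s ∈ Set.Icc 0 (dist q p), ∀ t ∈ Set.Icc 0 (dist q p), dist (σ s) (σ t) = |s - t|

/-- The Euclidean comparison angle at `q` of the triangle `(q, x, y)`. -/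
noncomputable def comparisonAngle {X : Type*} [MetricSpace X] (q x y : X) : ℝ :=
  Real.arccos ((dist q x ^ 2 + dist q y ^ 2 - dist x y ^ 2) / (2 * dist q x * dist q y))

/-- The (Alexandrov upper) angle at `q` between two curves `σ, r` emanating from `q`:
the `limsup` of comparison angles as both parameters tend to `0⁺`. -/
noncomputable def upperAngle {X : Type*} [MetricSpace X] (q : X) (σ r : ℝ → X) : ℝ :=
  Filter.limsup (fun st : ℝ × ℝ => comparisonAngle q (σ st.1) (r st.2))
    ((nhdsWithin (0 : ℝ) (Set.Ioi 0)) ×ˢ (nhdsWithin (0 : ℝ) (Set.Ioi 0)))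

private lemma aux_stepT (s t A B : ℝ) (hs : 0 < s) (ht : 0 < t)
    (key : (s^2 + B^2)/2 - (2*t)^2/4 ≤ A^2) :
    (s^2 + t^2 - A^2)/(2*s*t) ≤ (s^2 + (2*t)^2 - B^2)/(2*s*(2*t)) := by
  rw [div_le_div_iff₀ (by positivity) (by positivity)]
  nlinarith [mul_pos hs ht, key]

private lemma aux_stepS (s t A B : ℝ) (hs : 0 < s) (ht : 0 < t)
    (key : (t^2 + B^2)/2 - (2*s)^2/4 ≤ A^2) :
    (s^2 + t^2 - A^2)/(2*s*t) ≤ ((2*s)^2 + t^2 - B^2)/(2*(2*s)*t) := by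
  rw [div_le_div_iff₀ (by positivity) (by positivity)]
  nlinarith [mul_pos hs ht, key]

private lemma aux_term (s t d₁ δ A : ℝ) (hd : 0 < d₁)
    (hs1 : d₁/2 < s) (hs2 : s ≤ d₁) (ht1 : d₁/2 < t) (ht2 : t ≤ d₁)
    (hδ : 0 < δ) (hδle : δ ≤ 1/16)
    (hA1 : s + t - 4*δ*d₁ ≤ A) (hA0 : 0 ≤ A) :
    (s^2 + t^2 - A^2)/(2*s*t) ≤ -(1 - 32*δ) := by
  have hs0 : 0 < s := by linarith
  have ht0 : 0 < t := by linarith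
  have hδd : δ * d₁ ≤ (1/16) * d₁ := mul_le_mul_of_nonneg_right hδle hd.le
  have hA4 : 0 ≤ s + t - 4*δ*d₁ := by linarith
  have hAsq : (s + t - 4*δ*d₁)^2 ≤ A^2 := by nlinarith [hA1, hA4]
  have h1 : δ * (d₁ * s) ≤ δ * ((2*t) * s) :=
    mul_le_mul_of_nonneg_left
      (mul_le_mul_of_nonneg_right (by linarith : d₁ ≤ 2*t) hs0.le) hδ.le
  have h2 : δ * (d₁ * t) ≤ δ * ((2*s) * t) :=
    mul_le_mul_of_nonneg_left
      (mul_le_mul_of_nonneg_right (by linarith : d₁ ≤ 2*s) ht0.le) hδ.le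
  have h3 : 0 ≤ δ * (s * t) := by positivity
  rw [div_le_iff₀ (by positivity)]
  nlinarith [hAsq, h1, h2, h3, sq_nonneg (4*δ*d₁)]

private lemma aux_win (x b : ℝ) (hx : 0 < x) (hxb : x ≤ b) :
    ∃ n : ℕ, b/2 < 2^n * x ∧ 2^n * x ≤ b := by
  have hS : ∃ n : ℕ, b < 2^n * x := by
    obtain ⟨n, hn⟩ := pow_unbounded_of_one_lt (b/x) (one_lt_two (α := ℝ))
    exact ⟨n, by rwa [div_lt_iff₀ hx] at hn⟩
  classical
  rcases Nat.eq_zero_or_pos (Nat.find hS) with h0 | hpos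
  · have h := Nat.find_spec hS
    rw [h0] at h
    simp at h
    linarith
  · obtain ⟨m, hm⟩ := Nat.exists_eq_succ_of_ne_zero hpos.ne'
    have hspec := Nat.find_spec hS
    rw [hm, pow_succ] at hspec
    have hmin : ¬ b < 2^m * x := Nat.find_min hS (by rw [hm]; exact Nat.lt_succ_self m)
    exact ⟨m, by linarith, not_lt.mp hmin⟩

/-- In a nonnegatively curved Alexandrov space with one-point Tits boundary (equivalently
`diam S_R / R → 0`), for every `ε > 0` there is `D` such that for every point `q` with
`dist p q ≥ D`, every ray `r` starting at `q` and every minimizing segment `σ` from `q`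
to the fixed base point `p` make an angle at `q` of at least `π - ε`. -/
theorem angle_ray_segment_near_pi {X : Type*} [MetricSpace X]
    (hcurv : NonnegCurvature X) (p : X)
    (hdiam : Tendsto (fun R : ℝ => diam (sphere p R) / R) atTop (nhds 0)) :
    ∀ ε > (0 : ℝ), ∃ D : ℝ, ∀ q : X, D ≤ dist p q →
      ∀ r : ℝ → X, IsRayFrom r q → ∀ σ : ℝ → X, IsSegmentFromTo σ q p →
        π - ε ≤ upperAngle q σ r := by
  intro ε hε
  by_contra hcon
  push_neg at hcon
  have hπ3 : (3:ℝ) < π := Real.pi_gt_three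
  obtain ⟨ε', hε'pos, hε'leε, hε'le1, hε'ltπ⟩ :
      ∃ ε' : ℝ, 0 < ε' ∧ ε' ≤ ε ∧ ε' ≤ 1 ∧ ε' < π := by
    refine ⟨min ε 1, lt_min hε one_pos, min_le_left _ _, min_le_right _ _, ?_⟩
    exact lt_of_le_of_lt (min_le_right _ _) (by linarith)
  have hcos1 : Real.cos ε' < 1 := by
    have h := Real.cos_lt_cos_of_nonneg_of_le_pi (le_refl (0:ℝ)) hε'ltπ.le hε'pos
    simpa using h
  have hcosm1 : -1 ≤ Real.cos ε' := Real.neg_one_le_cos ε'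
  obtain ⟨δ, hδpos, hδle, hγ⟩ :
      ∃ δ : ℝ, 0 < δ ∧ δ ≤ 1/16 ∧ Real.cos ε' = 1 - 32*δ := by
    refine ⟨(1 - Real.cos ε') / 32, by linarith, by linarith, by ring⟩
  -- radius beyond which spheres are δ-thin
  obtain ⟨R₀, hR₀⟩ := Filter.eventually_atTop.mp (hdiam.eventually_lt_const hδpos)
  have hsph : ∀ R : ℝ, max R₀ 1 ≤ R → ∀ x y : X, dist x p = R → dist y p = R →
      dist x y ≤ δ * R := by
    intro R hR x y hx hy
    have hRpos : (0:ℝ) < R := lt_of_lt_of_le (by norm_num) (le_trans (le_max_right _ _) hR)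
    have h1 : diam (sphere p R) / R < δ := hR₀ R (le_trans (le_max_left _ _) hR)
    have h2 : diam (sphere p R) < δ * R := by rwa [div_lt_iff₀ hRpos] at h1
    have hx' : x ∈ sphere p R := by simpa [Metric.mem_sphere] using hx
    have hy' : y ∈ sphere p R := by simpa [Metric.mem_sphere] using hy
    exact le_trans (Metric.dist_le_diam_of_mem Metric.isBounded_sphere hx' hy') h2.le
  -- first bad point
  obtain ⟨q₁, hq₁D, r₁, hr₁, σ₁, hσ₁, hbad⟩ := hcon (max R₀ 1)
  set d₁ : ℝ := dist q₁ p with hd₁def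
  have hd₁ : max R₀ 1 ≤ d₁ := by rw [hd₁def, dist_comm]; exact hq₁D
  have hd₁1 : (1:ℝ) ≤ d₁ := le_trans (le_max_right _ _) hd₁
  have hd₁pos : 0 < d₁ := by linarith
  -- second bad point, far beyond the first
  obtain ⟨q₂, hq₂D, r₂, hr₂, σ₂, hσ₂, hbad₂⟩ := hcon (3 * d₁)
  set d₂ : ℝ := dist q₂ p with hd₂def
  have hd₂ : 3 * d₁ ≤ d₂ := by rw [hd₂def, dist_comm]; exact hq₂D
  have hd₂pos : 0 < d₂ := by linarith
  obtain ⟨hσ₁0, hσ₁d, hσ₁iso⟩ := hσ₁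
  obtain ⟨hσ₂0, hσ₂d, hσ₂iso⟩ := hσ₂
  obtain ⟨hr₁0, hr₁iso⟩ := hr₁
  -- basic distance facts
  have hray_dist : ∀ t : ℝ, 0 ≤ t → dist q₁ (r₁ t) = t := by
    intro t ht
    have h := hr₁iso 0 t le_rfl ht
    rw [hr₁0] at h
    rw [h, zero_sub, abs_neg, abs_of_nonneg ht]
  have hσ₁q : ∀ s : ℝ, 0 ≤ s → s ≤ d₁ → dist q₁ (σ₁ s) = s := by
    intro s h0 h1
    have h := hσ₁iso 0 ⟨le_rfl, hd₁pos.le⟩ s ⟨h0, h1⟩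
    rw [hσ₁0] at h
    rw [h, zero_sub, abs_neg, abs_of_nonneg h0]
  have hσ₁p : ∀ s : ℝ, 0 ≤ s → s ≤ d₁ → dist p (σ₁ s) = d₁ - s := by
    intro s h0 h1
    have h := hσ₁iso s ⟨h0, h1⟩ d₁ ⟨hd₁pos.le, le_rfl⟩
    rw [hσ₁d] at h
    rw [dist_comm p (σ₁ s), h, abs_of_nonpos (by linarith : s - d₁ ≤ 0)]
    ring
  have hσ₂p : ∀ u : ℝ, 0 ≤ u → u ≤ d₂ → dist (σ₂ u) p = d₂ - u := by
    intro u h0 h1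
    have h := hσ₂iso u ⟨h0, h1⟩ d₂ ⟨hd₂pos.le, le_rfl⟩
    rw [hσ₂d] at h
    rw [h, abs_of_nonpos (by linarith : u - d₂ ≤ 0)]
    ring
  -- pinning points on σ₂
  have hy₁ : dist (σ₂ (d₂ - d₁)) p = d₁ := by
    rw [hσ₂p _ (by linarith) (by linarith)]; ring
  have hy₃ : dist (σ₂ (d₂ - 3*d₁)) p = 3*d₁ := by
    rw [hσ₂p _ (by linarith) (by linarith)]; ring
  have hpin1 : dist q₁ (σ₂ (d₂ - d₁)) ≤ δ * d₁ :=
    hsph d₁ hd₁ q₁ (σ₂ (d₂ - d₁)) hd₁def.symm hy₁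
  have hy₁y₃ : dist (σ₂ (d₂ - d₁)) (σ₂ (d₂ - 3*d₁)) = 2*d₁ := by
    have h := hσ₂iso (d₂ - d₁) ⟨by linarith, by linarith⟩ (d₂ - 3*d₁) ⟨by linarith, by linarith⟩
    rw [h, show (d₂ - d₁) - (d₂ - 3*d₁) = 2*d₁ from by ring]
    exact abs_of_nonneg (by linarith)
  -- the ray reaches radius 3d₁
  have hrcont : ContinuousOn r₁ (Set.Icc 0 (4*d₁)) := by
    have hl : LipschitzOnWith 1 r₁ (Set.Icc 0 (4*d₁)) := by
      rw [lipschitzOnWith_iff_dist_le_mul]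
      intro a ha b hb
      rw [hr₁iso a b ha.1 hb.1, Real.dist_eq]
      simp
    exact hl.continuousOn
  have hρcont : ContinuousOn (fun t => dist p (r₁ t)) (Set.Icc 0 (4*d₁)) :=
    (continuous_const.dist continuous_id).comp_continuousOn hrcont
  obtain ⟨tstar, htsmem, hts⟩ : ∃ t ∈ Set.Icc 0 (4*d₁), dist p (r₁ t) = 3*d₁ := by
    have h0 : dist p (r₁ 0) = d₁ := by rw [hr₁0, dist_comm]
    have h4 : 3*d₁ ≤ dist p (r₁ (4*d₁)) := by
      have h1 := hray_dist (4*d₁) (by linarith)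
      have htri := dist_triangle q₁ p (r₁ (4*d₁))
      have hqp : dist q₁ p = d₁ := hd₁def.symm
      linarith
    have hsub := intermediate_value_Icc (by linarith : (0:ℝ) ≤ 4*d₁) hρcont
    have hmem : (3*d₁) ∈ Set.Icc (dist p (r₁ 0)) (dist p (r₁ (4*d₁))) := by
      rw [h0]; exact ⟨by linarith, h4⟩
    obtain ⟨t, htmem, ht⟩ := hsub hmem
    exact ⟨t, htmem, ht⟩
  have hts0 : 0 ≤ tstar := htsmem.1
  have htsd : dist q₁ (r₁ tstar) = tstar := hray_dist tstar hts0
  have hts_lb : 2*d₁ ≤ tstar := by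
    have htri := dist_triangle p q₁ (r₁ tstar)
    have hpq : dist p q₁ = d₁ := by rw [dist_comm]
    linarith
  have hpin3 : dist (σ₂ (d₂ - 3*d₁)) (r₁ tstar) ≤ δ * (3*d₁) := by
    refine hsph (3*d₁) (le_trans hd₁ (by linarith)) _ _ hy₃ ?_
    rw [dist_comm]; exact hts
  have hts_ub : tstar ≤ 2*d₁ + 4*δ*d₁ := by
    have htri := dist_triangle4 q₁ (σ₂ (d₂ - d₁)) (σ₂ (d₂ - 3*d₁)) (r₁ tstar)
    rw [htsd, hy₁y₃] at htri
    linarith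
  -- the ray escapes at full speed
  have hρlb : ∀ t : ℝ, 0 ≤ t → t ≤ tstar → t + d₁ - 4*δ*d₁ ≤ dist p (r₁ t) := by
    intro t ht0 htt
    have h1 := hr₁iso t tstar ht0 hts0
    have h2 : dist (r₁ t) (r₁ tstar) = tstar - t := by
      rw [h1, abs_of_nonpos (by linarith : t - tstar ≤ 0)]; ring
    have htri := dist_triangle p (r₁ t) (r₁ tstar)
    rw [hts] at htri
    linarith
  -- the comparison-cosine function
  obtain ⟨c, hcdef⟩ : ∃ c : ℝ → ℝ → ℝ,
      c = fun s t => (s^2 + t^2 - dist (σ₁ s) (r₁ t) ^ 2) / (2*s*t) := ⟨_, rfl⟩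
  -- doubling step in the ray parameter
  have hstepT : ∀ s t : ℝ, 0 < s → s ≤ d₁ → 0 < t → c s t ≤ c s (2*t) := by
    intro s t hs hsd ht
    have h02 : dist (r₁ 0) (r₁ (2*t)) = 2*t := by
      rw [hr₁iso 0 (2*t) le_rfl (by linarith), zero_sub, abs_neg,
        abs_of_nonneg (by linarith : (0:ℝ) ≤ 2*t)]
    have hy : dist (r₁ 0) (r₁ t) = dist (r₁ 0) (r₁ (2*t)) / 2 := by
      rw [hr₁iso 0 t le_rfl ht.le, h02, zero_sub, abs_neg, abs_of_nonneg ht.le]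
      ring
    have hz : dist (r₁ (2*t)) (r₁ t) = dist (r₁ 0) (r₁ (2*t)) / 2 := by
      rw [hr₁iso (2*t) t (by linarith) ht.le, h02, show 2*t - t = t from by ring,
        abs_of_nonneg ht.le]
      ring
    have key := hcurv (σ₁ s) (r₁ 0) (r₁ (2*t)) (r₁ t) hy hz
    have h0 : dist (σ₁ s) (r₁ 0) = s := by
      rw [hr₁0, dist_comm]; exact hσ₁q s hs.le hsd
    rw [h0, h02] at key
    simp only [hcdef]
    exact aux_stepT s t _ _ hs ht key
  -- doubling step in the segment parameter
  have hstepS : ∀ s t : ℝ, 0 < s → 2*s ≤ d₁ → 0 < t → c s t ≤ c (2*s) t := by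
    intro s t hs hsd ht
    have h02 : dist (σ₁ 0) (σ₁ (2*s)) = 2*s := by
      rw [hσ₁iso 0 ⟨le_rfl, hd₁pos.le⟩ (2*s) ⟨by linarith, hsd⟩, zero_sub, abs_neg,
        abs_of_nonneg (by linarith : (0:ℝ) ≤ 2*s)]
    have hy : dist (σ₁ 0) (σ₁ s) = dist (σ₁ 0) (σ₁ (2*s)) / 2 := by
      rw [hσ₁iso 0 ⟨le_rfl, hd₁pos.le⟩ s ⟨hs.le, by linarith⟩, h02, zero_sub, abs_neg,
        abs_of_nonneg hs.le]
      ring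
    have hz : dist (σ₁ (2*s)) (σ₁ s) = dist (σ₁ 0) (σ₁ (2*s)) / 2 := by
      rw [hσ₁iso (2*s) ⟨by linarith, hsd⟩ s ⟨hs.le, by linarith⟩, h02,
        show 2*s - s = s from by ring, abs_of_nonneg hs.le]
      ring
    have key := hcurv (r₁ t) (σ₁ 0) (σ₁ (2*s)) (σ₁ s) hy hz
    have h0 : dist (r₁ t) (σ₁ 0) = t := by
      rw [hσ₁0, dist_comm]; exact hray_dist t ht.le
    rw [h0, h02, dist_comm (r₁ t) (σ₁ (2*s)), dist_comm (r₁ t) (σ₁ s)] at key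
    simp only [hcdef]
    exact aux_stepS s t _ _ hs ht key
  -- terminal estimate in the window (d₁/2, d₁]
  have hterm : ∀ s t : ℝ, d₁/2 < s → s ≤ d₁ → d₁/2 < t → t ≤ d₁ → c s t ≤ -Real.cos ε' := by
    intro s t hs1 hs2 ht1 ht2
    have hs0 : 0 < s := by linarith
    have ht0 : 0 < t := by linarith
    have hρ : t + d₁ - 4*δ*d₁ ≤ dist p (r₁ t) := hρlb t ht0.le (by linarith)
    have hσp : dist p (σ₁ s) = d₁ - s := hσ₁p s hs0.le hs2
    have htri := dist_triangle p (σ₁ s) (r₁ t)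
    have hA1 : s + t - 4*δ*d₁ ≤ dist (σ₁ s) (r₁ t) := by linarith
    have hfin := aux_term s t d₁ δ (dist (σ₁ s) (r₁ t)) hd₁pos hs1 hs2 ht1 ht2
      hδpos hδle hA1 dist_nonneg
    simp only [hcdef]
    rw [hγ]
    exact hfin
  -- chained doubling
  have hchainT : ∀ s t : ℝ, 0 < s → s ≤ d₁ → 0 < t → ∀ n : ℕ, c s t ≤ c s (2^n * t) := by
    intro s t hs hsd ht n
    induction n with
    | zero => rw [pow_zero, one_mul]
    | succ k ih =>
      have h1 : c s (2^k * t) ≤ c s (2*(2^k*t)) := hstepT s (2^k*t) hs hsd (by positivity)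
      calc c s t ≤ c s (2^k*t) := ih
        _ ≤ c s (2^(k+1)*t) := by
            rw [show (2:ℝ)^(k+1)*t = 2*(2^k*t) from by ring]; exact h1
  have hchainS : ∀ s t : ℝ, 0 < s → 0 < t → ∀ n : ℕ, 2^n * s ≤ d₁ → c s t ≤ c (2^n * s) t := by
    intro s t hs ht n
    induction n with
    | zero => intro _; rw [pow_zero, one_mul]
    | succ k ih =>
      intro hn
      have hk : 2^k * s ≤ d₁ := by
        have hle : (2:ℝ)^k * s ≤ 2^(k+1) * s := by
          have : (2:ℝ)^k ≤ 2^(k+1) := by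
            apply pow_le_pow_right₀ (by norm_num) (Nat.le_succ k)
          nlinarith
        linarith
      have h1 : c (2^k*s) t ≤ c (2*(2^k*s)) t := by
        refine hstepS (2^k*s) t (by positivity) ?_ ht
        rw [show 2*((2:ℝ)^k*s) = 2^(k+1)*s from by ring]; exact hn
      calc c s t ≤ c (2^k * s) t := ih hk
        _ ≤ c (2^(k+1)*s) t := by
            rw [show (2:ℝ)^(k+1)*s = 2*(2^k*s) from by ring]; exact h1
  -- main cosine bound for all small parameters
  have hmain : ∀ s t : ℝ, 0 < s → s ≤ d₁ → 0 < t → t ≤ d₁ → c s t ≤ -Real.cos ε' := by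
    intro s t hs hsd ht htd
    obtain ⟨n, hn1, hn2⟩ := aux_win t d₁ ht htd
    obtain ⟨m, hm1, hm2⟩ := aux_win s d₁ hs hsd
    calc c s t ≤ c s (2^n*t) := hchainT s t hs hsd ht n
      _ ≤ c (2^m*s) (2^n*t) := hchainS s (2^n*t) hs (by positivity) m hm2
      _ ≤ -Real.cos ε' := hterm _ _ hm1 hm2 hn1 hn2
  -- angle bound
  have hang : ∀ s t : ℝ, 0 < s → s ≤ d₁ → 0 < t → t ≤ d₁ →
      π - ε' ≤ comparisonAngle q₁ (σ₁ s) (r₁ t) := by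
    intro s t hs hsd ht htd
    have h1 : dist q₁ (σ₁ s) = s := hσ₁q s hs.le hsd
    have h2 : dist q₁ (r₁ t) = t := hray_dist t ht.le
    have hE : (dist q₁ (σ₁ s) ^ 2 + dist q₁ (r₁ t) ^ 2 - dist (σ₁ s) (r₁ t) ^ 2) /
        (2 * dist q₁ (σ₁ s) * dist q₁ (r₁ t)) ≤ -Real.cos ε' := by
      rw [h1, h2]
      have h := hmain s t hs hsd ht htd
      simp only [hcdef] at h
      exact h
    have harc : Real.arccos (-Real.cos ε') = π - ε' := by
      rw [Real.arccos_neg, Real.arccos_cos hε'pos.le hε'ltπ.le]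
    unfold comparisonAngle
    rw [← harc, Real.arccos_eq_pi_div_two_sub_arcsin, Real.arccos_eq_pi_div_two_sub_arcsin]
    have := Real.monotone_arcsin hE
    linarith
  -- conclude via limsup
  have hIoc : Set.Ioc (0:ℝ) d₁ ∈ nhdsWithin (0:ℝ) (Set.Ioi 0) :=
    Ioc_mem_nhdsGT_of_mem ⟨le_rfl, hd₁pos⟩
  have hev2 : ∀ᶠ st : ℝ × ℝ in (nhdsWithin (0:ℝ) (Set.Ioi 0)) ×ˢ (nhdsWithin (0:ℝ) (Set.Ioi 0)),
      π - ε' ≤ comparisonAngle q₁ (σ₁ st.1) (r₁ st.2) := by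
    filter_upwards [Filter.prod_mem_prod hIoc hIoc] with st hst
    exact hang st.1 st.2 hst.1.1 hst.1.2 hst.2.1 hst.2.2
  have hbdd : Filter.IsBoundedUnder (· ≤ ·)
      ((nhdsWithin (0:ℝ) (Set.Ioi 0)) ×ˢ (nhdsWithin (0:ℝ) (Set.Ioi 0)))
      (fun st : ℝ × ℝ => comparisonAngle q₁ (σ₁ st.1) (r₁ st.2)) := by
    refine ⟨π, ?_⟩
    rw [Filter.eventually_map]
    exact Filter.Eventually.of_forall fun st => by
      unfold comparisonAngle; exact Real.arccos_le_pi _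
  have hfin : π - ε' ≤ upperAngle q₁ σ₁ r₁ := by
    unfold upperAngle
    exact Filter.le_limsup_of_frequently_le hev2.frequently hbdd
  linarith
end

section
/- In a geodesic metric space of nonnegative curvature (Alexandrov), let C be a closed geodesic and r a ray with r(0) ∈ C. Then r is perpendicular to C: the angle at r(0) between r and each of the two directions of C is exactly π/2. -/
open Real Filter

/-- A closed geodesic of length `ℓ`: a unit-speed `ℓ`-periodic curve `ℝ → X` which is
locally isometric. -/
def IsClosedGeodesic {X : Type*} [MetricSpace X] (γ : ℝ → X) (ℓ : ℝ) : Prop :=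
  0 < ℓ ∧ (∀ t, γ (t + ℓ) = γ t) ∧
    ∀ t : ℝ, ∃ ε > (0 : ℝ), ∀ a ∈ Set.Icc (t - ε) (t + ε), ∀ b ∈ Set.Icc (t - ε) (t + ε),
      dist (γ a) (γ b) = |a - b|

/-!
The Busemann function `b x = lim (dist x (r s) - s)` of the ray is midpoint concave in
nonnegative curvature (comparison in the triangles `y, z, r s`, letting `s → ∞`). Along the
closed geodesic it is thus a continuous, periodic, locally midpoint-concave function, hence
constant, equal to `b (r 0) = 0`. So `dist (γ t) (r s) ≥ s`, and comparison in the triangles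
`γ t, r 0, r (2 s)` upgrades this to `dist (γ t) (r s) ^ 2 ≥ s ^ 2 + dist (γ t) (r 0) ^ 2`: all
comparison angles between `r` and `γ` at `r 0` are at least `π / 2`. As `γ 0` is the midpoint
of `γ t` and `γ (-t)` for small `t`, comparison in the triangle `γ t, γ (-t), r s` forces
equality.
-/

open Set Function Topology
open scoped NNReal

noncomputable def busemann {X : Type*} [MetricSpace X] (r : ℝ → X) (x : X) : ℝ :=
  ⨅ s : ℝ≥0, (dist x (r s) - s)

theorem eq_of_forall_le_of_locally_midpoint_concave {f : ℝ → ℝ} (hf : Continuous f)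
    (hmid : ∀ t, ∀ᶠ h in 𝓝 0, f (t + h) + f (t - h) ≤ 2 * f t) {t₀ : ℝ}
    (hmin : ∀ t, f t₀ ≤ f t) (t : ℝ) : f t = f t₀ := by
  have hclopen : IsClopen {t | f t = f t₀} := by
    refine ⟨isClosed_eq hf continuous_const, isOpen_iff_mem_nhds.2 fun t (ht : f t = f t₀) => ?_⟩
    have hshift : Tendsto (fun u => u - t) (𝓝 t) (𝓝 0) := by
      simpa using (continuous_sub_right t).tendsto t
    filter_upwards [hshift.eventually (hmid t)] with u hu
    rw [add_sub_cancel, show t - (u - t) = 2 * t - u by ring] at hu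
    have hu_min := hmin u
    have hreflect_min := hmin (2 * t - u)
    show f u = f t₀
    linarith
  exact eq_univ_iff_forall.1 (hclopen.eq_univ ⟨t₀, rfl⟩) t

theorem Function.Periodic.eq_of_locally_midpoint_concave {f : ℝ → ℝ} {ℓ : ℝ}
    (hper : Periodic f ℓ) (hℓ : ℓ ≠ 0) (hf : Continuous f)
    (hmid : ∀ t, ∀ᶠ h in 𝓝 0, f (t + h) + f (t - h) ≤ 2 * f t) (a b : ℝ) : f a = f b := by
  obtain ⟨_, ⟨t₀, rfl⟩, hleast⟩ :=
    (hper.compact_of_continuous hℓ hf).exists_isLeast (range_nonempty f)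
  have hmin : ∀ t, f t₀ ≤ f t := fun t => hleast ⟨t, rfl⟩
  rw [eq_of_forall_le_of_locally_midpoint_concave hf hmid hmin a,
    eq_of_forall_le_of_locally_midpoint_concave hf hmid hmin b]

theorem apply_zero_le_of_add_apply_two_mul_le {f : ℝ → ℝ} (hf : ∀ s, 0 ≤ s → 0 ≤ f s)
    (hmid : ∀ s, 0 ≤ s → f 0 + f (2 * s) ≤ 2 * f s) {s : ℝ} (hs : 0 ≤ s) : f 0 ≤ f s := by
  have hdyadic : ∀ n : ℕ, ∀ s, 0 ≤ s → (1 - (1 / 2 : ℝ) ^ n) * f 0 ≤ f s := by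
    intro n
    induction n with
    | zero => intro s hs; simpa using hf s hs
    | succ n ih =>
      intro s hs
      have hfar := ih (2 * s) (by linarith)
      have hs_mid := hmid s hs
      rw [pow_succ]
      linarith
  have hlim : Tendsto (fun n : ℕ => (1 - (1 / 2 : ℝ) ^ n) * f 0) atTop (𝓝 ((1 - 0) * f 0)) :=
    ((tendsto_pow_atTop_nhds_zero_of_lt_one (by norm_num) (by norm_num)).const_sub 1).mul_const _
  simpa using le_of_tendsto' hlim fun n => hdyadic n s hs

theorem comparisonAngle_eq_pi_div_two {X : Type*} [MetricSpace X] {q x y : X}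
    (h : dist x y ^ 2 = dist q x ^ 2 + dist q y ^ 2) : comparisonAngle q x y = π / 2 := by
  rw [comparisonAngle, h, sub_self, zero_div, arccos_zero]

theorem upperAngle_eq_pi_div_two {X : Type*} [MetricSpace X] {q : X} {σ r : ℝ → X}
    (h : ∀ᶠ st : ℝ × ℝ in 𝓝[>] 0 ×ˢ 𝓝[>] 0,
      dist (σ st.1) (r st.2) ^ 2 = dist q (σ st.1) ^ 2 + dist q (r st.2) ^ 2) :
    upperAngle q σ r = π / 2 := by
  rw [upperAngle, limsup_congr (h.mono fun _ => comparisonAngle_eq_pi_div_two), limsup_const]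

namespace IsRayFrom

variable {X : Type*} [MetricSpace X] {r : ℝ → X} {q : X}

theorem dist_start (hr : IsRayFrom r q) {s : ℝ} (hs : 0 ≤ s) : dist q (r s) = s := by
  rw [← hr.1, hr.2 0 s le_rfl hs, zero_sub, abs_neg, abs_of_nonneg hs]

theorem antitone_dist_sub (hr : IsRayFrom r q) (x : X) :
    Antitone fun s : ℝ≥0 => dist x (r s) - s := by
  intro s s' hss'
  have hstep : dist (r s) (r s') = s' - s := by
    rw [hr.2 _ _ s.coe_nonneg s'.coe_nonneg, abs_sub_comm,
      abs_of_nonneg (sub_nonneg.2 (NNReal.coe_le_coe.2 hss'))]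
  have := dist_triangle x (r s) (r s')
  dsimp only
  linarith

theorem bddBelow_dist_sub (hr : IsRayFrom r q) (x : X) :
    BddBelow (range fun s : ℝ≥0 => dist x (r s) - s) := by
  refine ⟨-dist x q, ?_⟩
  rintro _ ⟨s, rfl⟩
  have := dist_triangle q x (r s)
  rw [hr.dist_start s.coe_nonneg, dist_comm q x] at this
  dsimp only
  linarith

theorem tendsto_busemann (hr : IsRayFrom r q) (x : X) :
    Tendsto (fun s : ℝ≥0 => dist x (r s) - s) atTop (𝓝 (busemann r x)) :=
  tendsto_atTop_ciInf (hr.antitone_dist_sub x) (hr.bddBelow_dist_sub x)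

theorem busemann_le (hr : IsRayFrom r q) (x : X) (s : ℝ≥0) :
    busemann r x ≤ dist x (r s) - s :=
  ciInf_le (hr.bddBelow_dist_sub x) s

theorem busemann_start (hr : IsRayFrom r q) : busemann r q = 0 := by
  have : ∀ s : ℝ≥0, dist q (r s) - s = 0 := fun s => by rw [hr.dist_start s.coe_nonneg, sub_self]
  simp only [busemann, this, ciInf_const]

theorem lipschitzWith_busemann (hr : IsRayFrom r q) : LipschitzWith 1 (busemann r) :=
  LipschitzWith.of_le_add fun x y =>
    le_of_tendsto_of_tendsto' (hr.tendsto_busemann x) ((hr.tendsto_busemann y).add_const _)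
      fun s => by have := dist_triangle x y (r s); linarith

theorem busemann_add_le_two_mul (hcurv : NonnegCurvature X) (hr : IsRayFrom r q) {y z m : X}
    (hym : dist y m = dist y z / 2) (hzm : dist z m = dist y z / 2) :
    busemann r y + busemann r z ≤ 2 * busemann r m := by
  have hbound : ∀ s : ℝ≥0, 0 < s →
      busemann r y + busemann r z ≤
        2 * (dist m (r s) - s) + (dist m q ^ 2 + dist y z ^ 2 / 4) / s := by
    intro s hs
    have hs : (0 : ℝ) < s := hs
    have hc := hcurv (r s) y z m hym hzm
    rw [dist_comm (r s) y, dist_comm (r s) z, dist_comm (r s) m] at hc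
    have hclose := abs_dist_sub_le m q (r s)
    rw [hr.dist_start s.coe_nonneg] at hclose
    have hsq : (dist m (r s) - s) ^ 2 ≤ dist m q ^ 2 :=
      sq_le_sq' (abs_le.1 hclose).1 (abs_le.1 hclose).2
    have hK : s * (busemann r y + busemann r z - 2 * (dist m (r s) - s)) ≤
        dist m q ^ 2 + dist y z ^ 2 / 4 := by
      linarith [mul_le_mul_of_nonneg_left (hr.busemann_le y s) hs.le,
        mul_le_mul_of_nonneg_left (hr.busemann_le z s) hs.le,
        sq_nonneg (dist y (r s) - s), sq_nonneg (dist z (r s) - s)]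
    linarith [(le_div_iff₀' hs).2 hK]
  have hlim : Tendsto
      (fun s : ℝ≥0 => 2 * (dist m (r s) - s) + (dist m q ^ 2 + dist y z ^ 2 / 4) / s) atTop (𝓝 (2 * busemann r m + 0)) :=
    ((hr.tendsto_busemann m).const_mul 2).add
      (tendsto_const_nhds.div_atTop (NNReal.tendsto_coe_atTop.2 tendsto_id))
  rw [add_zero] at hlim
  exact ge_of_tendsto hlim ((eventually_gt_atTop 0).mono hbound)

theorem dist_sq_add_dist_sq_le (hcurv : NonnegCurvature X) (hr : IsRayFrom r q) {x : X}
    (hx : 0 ≤ busemann r x) {s : ℝ} (hs : 0 ≤ s) :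
    dist q (r s) ^ 2 + dist q x ^ 2 ≤ dist (r s) x ^ 2 := by
  have hfar : ∀ s : ℝ, 0 ≤ s → s ≤ dist x (r s) := fun s hs => by
    have : busemann r x ≤ dist x (r s) - s := hr.busemann_le x ⟨s, hs⟩
    linarith
  have hmid : ∀ s : ℝ, 0 ≤ s →
      dist x (r 0) ^ 2 + (dist x (r (2 * s)) ^ 2 - (2 * s) ^ 2) ≤
        2 * (dist x (r s) ^ 2 - s ^ 2) := by
    intro s hs
    have h2s : (0 : ℝ) ≤ 2 * s := by linarith
    have hd1 : dist (r 0) (r s) = s := by rw [hr.1]; exact hr.dist_start hs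
    have hd2 : dist (r 0) (r (2 * s)) = 2 * s := by rw [hr.1]; exact hr.dist_start h2s
    have hd3 : dist (r (2 * s)) (r s) = s := by
      rw [hr.2 _ _ h2s hs, show 2 * s - s = s by ring, abs_of_nonneg hs]
    have hc := hcurv x (r 0) (r (2 * s)) (r s) (by rw [hd1, hd2]; ring) (by rw [hd3, hd2]; ring)
    rw [hd2] at hc
    linarith
  have hf := apply_zero_le_of_add_apply_two_mul_le (f := fun s => dist x (r s) ^ 2 - s ^ 2)
    (fun s hs => sub_nonneg.2 (pow_le_pow_left₀ hs (hfar s hs) 2)) (by simpa using hmid) hs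
  rw [hr.dist_start hs, dist_comm q x, ← hr.1, dist_comm (r s) x]
  linarith

end IsRayFrom

theorem NonnegCurvature.dist_sq_eq_of_midpoint {X : Type*} [MetricSpace X]
    (hcurv : NonnegCurvature X) {x y z m : X}
    (hym : dist y m = dist y z / 2) (hzm : dist z m = dist y z / 2)
    (hy : dist m x ^ 2 + dist m y ^ 2 ≤ dist x y ^ 2)
    (hz : dist m x ^ 2 + dist m z ^ 2 ≤ dist x z ^ 2) :
    dist x y ^ 2 = dist m x ^ 2 + dist m y ^ 2 ∧ dist x z ^ 2 = dist m x ^ 2 + dist m z ^ 2 := by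
  have hcomp := hcurv x y z m hym hzm
  rw [dist_comm m y, hym] at hy ⊢
  rw [dist_comm m z, hzm] at hz ⊢
  rw [dist_comm m x] at hy hz ⊢
  constructor <;> linarith

namespace IsClosedGeodesic

variable {X : Type*} [MetricSpace X] {γ : ℝ → X} {ℓ : ℝ}

theorem eventually_dist_eq (hγ : IsClosedGeodesic γ ℓ) (t : ℝ) :
    ∀ᶠ h in 𝓝 (0 : ℝ), dist (γ (t + h)) (γ t) = |h| ∧ dist (γ (t - h)) (γ t) = |h| ∧
      dist (γ (t + h)) (γ (t - h)) = 2 * |h| := by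
  obtain ⟨ε, hε, hiso⟩ := hγ.2.2 t
  have hd : ∀ u v, |u| ≤ ε → |v| ≤ ε → dist (γ (t + u)) (γ (t + v)) = |u - v| := by
    intro u v hu hv
    obtain ⟨hu₁, hu₂⟩ := abs_le.1 hu
    obtain ⟨hv₁, hv₂⟩ := abs_le.1 hv
    rw [hiso _ ⟨by linarith, by linarith⟩ _ ⟨by linarith, by linarith⟩, add_sub_add_left_eq_sub]
  filter_upwards [Metric.closedBall_mem_nhds (0 : ℝ) hε] with h hh
  rw [Metric.mem_closedBall, dist_zero_right, norm_eq_abs] at hh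
  have h0 : |(0 : ℝ)| ≤ ε := by simpa using hε.le
  have hneg : |-h| ≤ ε := by rwa [abs_neg]
  refine ⟨?_, ?_, ?_⟩
  · simpa using hd h 0 hh h0
  · simpa [sub_eq_add_neg] using hd (-h) 0 hneg h0
  · rw [sub_eq_add_neg, hd h (-h) hh hneg, sub_neg_eq_add, ← two_mul, abs_mul, abs_two]

theorem continuous (hγ : IsClosedGeodesic γ ℓ) : Continuous γ := by
  refine continuous_iff_continuousAt.2 fun t => ?_
  rw [ContinuousAt, ← map_add_left_nhds_zero t, tendsto_map'_iff, tendsto_iff_dist_tendsto_zero]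
  have habs : Tendsto (fun h : ℝ => |h|) (𝓝 0) (𝓝 0) := by
    simpa using continuous_abs.tendsto (0 : ℝ)
  exact habs.congr' ((hγ.eventually_dist_eq t).mono fun h hh => hh.1.symm)

theorem busemann_eq_zero (hcurv : NonnegCurvature X) (hγ : IsClosedGeodesic γ ℓ) {r : ℝ → X}
    (hr : IsRayFrom r (γ 0)) (t : ℝ) : busemann r (γ t) = 0 := by
  have hper : Periodic (busemann r ∘ γ) ℓ := fun t => by simp only [comp_apply, hγ.2.1 t]
  have hmid : ∀ t, ∀ᶠ h in 𝓝 0,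
      busemann r (γ (t + h)) + busemann r (γ (t - h)) ≤ 2 * busemann r (γ t) := fun t =>
    (hγ.eventually_dist_eq t).mono fun h ⟨hp, hm, hpm⟩ =>
      hr.busemann_add_le_two_mul hcurv (by rw [hp, hpm]; ring) (by rw [hm, hpm]; ring)
  rw [← hr.busemann_start]
  exact hper.eq_of_locally_midpoint_concave hγ.1.ne'
    (hr.lipschitzWith_busemann.continuous.comp hγ.continuous) hmid t 0

end IsClosedGeodesic

/-- In a nonnegatively curved Alexandrov space, a ray `r` starting on a closed geodesic `C`
is perpendicular to `C`: the angle at `r 0` between `r` and each of the two directions of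
the closed geodesic is exactly `π/2`. -/
theorem ray_perpendicular_to_closed_geodesic {X : Type*} [MetricSpace X]
    (hcurv : NonnegCurvature X) (γ : ℝ → X) (ℓ : ℝ) (hγ : IsClosedGeodesic γ ℓ)
    (r : ℝ → X) (hr : IsRayFrom r (γ 0)) :
    upperAngle (γ 0) r (fun t => γ t) = π / 2 ∧
      upperAngle (γ 0) r (fun t => γ (-t)) = π / 2 := by
  have hright : ∀ᶠ t in 𝓝 (0 : ℝ), ∀ s, 0 ≤ s →
      dist (r s) (γ t) ^ 2 = dist (γ 0) (r s) ^ 2 + dist (γ 0) (γ t) ^ 2 ∧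
        dist (r s) (γ (-t)) ^ 2 = dist (γ 0) (r s) ^ 2 + dist (γ 0) (γ (-t)) ^ 2 := by
    filter_upwards [hγ.eventually_dist_eq 0] with t ⟨hp, hm, hpm⟩ s hs
    simp only [zero_add, zero_sub] at hp hm hpm
    have hpyth : ∀ u, dist (γ 0) (r s) ^ 2 + dist (γ 0) (γ u) ^ 2 ≤ dist (r s) (γ u) ^ 2 :=
      fun u => hr.dist_sq_add_dist_sq_le hcurv (hγ.busemann_eq_zero hcurv hr u).ge hs
    exact hcurv.dist_sq_eq_of_midpoint (by rw [hp, hpm]; ring) (by rw [hm, hpm]; ring)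
      (hpyth t) (hpyth (-t))
  have hev := (eventually_mem_nhdsWithin (a := (0 : ℝ)) (s := Ioi 0)).prod_mk
    (nhdsWithin_le_nhds (a := (0 : ℝ)) (s := Ioi 0) hright)
  exact ⟨upperAngle_eq_pi_div_two (hev.mono fun st h => (h.2 st.1 h.1.le).1),
    upperAngle_eq_pi_div_two (hev.mono fun st h => (h.2 st.1 h.1.le).2)⟩
end
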